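/- arXiv:1410.8657 — 2 statements merged into one kernel-verified Lean document; each statement's English description precedes it below -/
import Mathlib

section
/- The matrix Q is positive definite (as a real symmetric matrix); in particular, if x ∈ ℚ⁷ satisfies Σ_{i,k} Q_{ik} x_i x_k = 0 then x = 0, i.e., the quadric x Q xᵀ = 0 has no nonzero rational point. -/
/-!
Symmetric Gaussian elimination writes `Q = Uᵀ D U` with `U` upper triangular with nonzero
diagonal and `D` a positive diagonal matrix, so `xᵀ Q x = (U x)ᵀ D (U x) > 0` for `x ≠ 0`
over every ordered field, `ℚ` as well as `ℝ`.
-/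

/-- The symmetric matrix Q, viewed over ℝ. -/
def Qr : Matrix (Fin 7) (Fin 7) ℝ :=
  !![7,3,3,1,-3,-3,-5; 3,7,3,3,1,-3,-3; 3,3,7,3,3,1,-3; 1,3,3,7,3,3,1;
     -3,1,3,3,7,3,3; -3,-3,1,3,3,7,3; -5,-3,-3,1,3,3,7]

/-- The symmetric matrix Q, viewed over ℚ. -/
def Qq : Matrix (Fin 7) (Fin 7) ℚ :=
  !![7,3,3,1,-3,-3,-5; 3,7,3,3,1,-3,-3; 3,3,7,3,3,1,-3; 1,3,3,7,3,3,1;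
     -3,1,3,3,7,3,3; -3,-3,1,3,3,7,3; -5,-3,-3,1,3,3,7]

open Matrix

theorem Matrix.PosDef.conjTranspose_mul_diagonal_mul_of_isUpperTriangular
    {n R : Type*} [Fintype n] [LinearOrder n] [Field R] [PartialOrder R] [StarRing R]
    [StarOrderedRing R] {U : Matrix n n R} {d : n → R}
    (hU : U.IsUpperTriangular) (hdiag : ∀ i, U i i ≠ 0) (hd : ∀ i, 0 < d i) :
    (Uᴴ * diagonal d * U).PosDef := by
  have hdet : U.det ≠ 0 := by
    rw [det_of_isUpperTriangular hU]
    exact Finset.prod_ne_zero_iff.mpr fun i _ => hdiag i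
  exact (PosDef.diagonal hd).conjTranspose_mul_mul_same
    (mulVec_injective_iff_isUnit.mpr ((isUnit_iff_isUnit_det U).mpr hdet.isUnit))

theorem Matrix.PosDef.eq_zero_of_sum_mul_mul_eq_zero
    {n R : Type*} [Fintype n] [CommRing R] [PartialOrder R] [StarRing R] [TrivialStar R]
    {A : Matrix n n R} (hA : A.PosDef) {x : n → R}
    (hx : ∑ i, ∑ k, A i k * x i * x k = 0) : x = 0 := by
  by_contra hne
  have hform : star x ⬝ᵥ A *ᵥ x = ∑ i, ∑ k, A i k * x i * x k := by
    simp only [star_trivial, dotProduct, mulVec, Finset.mul_sum]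
    exact Finset.sum_congr rfl fun i _ => Finset.sum_congr rfl fun k _ => by ring
  exact (hA.dotProduct_mulVec_pos hne).ne' (hform.trans hx)

/-- The unit upper triangular LDLᵀ factor of `Q` with each row rescaled to integer entries;
`ldlPivotsQ` absorbs the scaling. -/
def ldlFactorQ : Matrix (Fin 7) (Fin 7) ℚ :=
  !![7,3,3,1,-3,-3,-5; 0,20,6,9,8,-6,-3; 0,0,26,9,18,14,-3; 0,0,0,22,5,14,10;
     0,0,0,0,15,-2,8; 0,0,0,0,0,4,-1; 0,0,0,0,0,0,1]

def ldlPivotsQ : Fin 7 → ℚ := ![1/7, 1/70, 1/130, 3/286, 1/110, 1/10, 3/2]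

-- Rational division does not reduce in the elaborator, so the check is left to the kernel.
theorem Qq_eq_ldl : Qq = ldlFactorQᵀ * diagonal ldlPivotsQ * ldlFactorQ := by
  decide +kernel

theorem ldlFactorQ_isUpperTriangular : ldlFactorQ.IsUpperTriangular := by decide

theorem ldlFactorQ_diag_ne_zero : ∀ i, ldlFactorQ i i ≠ 0 := by decide

theorem ldlPivotsQ_pos : ∀ i, 0 < ldlPivotsQ i := by decide +kernel

theorem posDef_map_Qq (K : Type*) [Field K] [LinearOrder K] [StarRing K]
    [StarOrderedRing K] [TrivialStar K] : (Qq.map (Rat.castHom K)).PosDef := by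
  rw [Qq_eq_ldl, Matrix.map_mul, Matrix.map_mul, transpose_map, diagonal_map (map_zero _),
    ← conjTranspose_eq_transpose_of_trivial]
  exact .conjTranspose_mul_diagonal_mul_of_isUpperTriangular (ldlFactorQ_isUpperTriangular.map _)
    (fun i => by simpa using ldlFactorQ_diag_ne_zero i) (fun i => by simpa using ldlPivotsQ_pos i)

theorem Qr_eq_map_Qq : Qr = Qq.map (Rat.castHom ℝ) := by
  ext i j; fin_cases i <;> fin_cases j <;> norm_num [Qr, Qq]

/-- Q is positive definite as a real symmetric matrix; in particular the quadric
`x Q xᵀ = 0` has no nonzero rational point. -/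
theorem Q_posDef_and_no_rational_point :
    Qr.PosDef ∧
      ∀ x : Fin 7 → ℚ, (∑ i : Fin 7, ∑ k : Fin 7, Qq i k * x i * x k) = 0 → x = 0 := by
  have hQq : Qq.PosDef := by simpa using posDef_map_Qq ℚ
  exact ⟨Qr_eq_map_Qq ▸ posDef_map_Qq ℝ, fun _ => hQq.eq_zero_of_sum_mul_mul_eq_zero⟩
end

section
/- Every element of order 2 in the subgroup of GL₇(ℚ) generated by A and B has trace equal to −1. -/
/-!
The matrices `A` and `B` preserve the bilinear product `cross7` on `ℚ⁷`, which satisfies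
`x × (x × y) = ⟪x, y⟫ • x - ⟪x, x⟫ • y` for the positive definite form `⟪·, ·⟫ = cross7Form`,
so for `x ≠ 0` the kernel of `y ↦ x × y` lies in `ℚ ∙ x`. Let `g ≠ 1` be an involution
preserving `×`, with `±1`-eigenspaces `V₊` and `V₋`, and pick `x ≠ 0` in `V₋`. Then
`y ↦ x × y` maps `V₊` injectively into `V₋`, and `V₋` into `V₊` with kernel in `ℚ ∙ x`, so
`dim V₊ ≤ dim V₋ ≤ dim V₊ + 1`. As `dim V₊ + dim V₋ = 7` is odd, `dim V₋ = dim V₊ + 1` and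
`tr g = dim V₊ - dim V₋ = -1`.
-/

noncomputable section

def Amat : Matrix (Fin 7) (Fin 7) ℚ :=
  !![-1,0,0,0,0,0,0; 0,-1,0,0,0,0,0; 0,1,0,0,0,1,0; -1,0,0,0,0,0,1;
     0,0,0,0,1,0,0; 0,1,1,0,0,0,0; -1,0,0,1,0,0,0]

def Bmat : Matrix (Fin 7) (Fin 7) ℚ :=
  !![0,-1,0,0,0,-1,0; 0,1,1,0,0,0,0; 0,-1,0,0,0,0,0; 1,0,0,0,0,0,0;
     0,0,0,0,0,0,-1; 0,0,0,-1,0,0,1; 0,0,0,0,1,0,1]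

def BmatInv : Matrix (Fin 7) (Fin 7) ℚ :=
  !![0,0,0,1,0,0,0; 0,0,-1,0,0,0,0; 0,1,1,0,0,0,0; 0,0,0,0,-1,-1,0;
     0,0,0,0,1,0,1; -1,0,1,0,0,0,0; 0,0,0,0,-1,0,0]

set_option maxHeartbeats 1000000 in
/-- The matrix A as an element of GL₇(ℚ) (it is an involution). -/
def AU : GL (Fin 7) ℚ :=
  ⟨Amat, Amat,
    by ext i j; fin_cases i <;> fin_cases j <;>
      norm_num [Matrix.mul_apply, Fin.sum_univ_succ, Matrix.one_apply, Fin.ext_iff, Amat],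
    by ext i j; fin_cases i <;> fin_cases j <;>
      norm_num [Matrix.mul_apply, Fin.sum_univ_succ, Matrix.one_apply, Fin.ext_iff, Amat]⟩

set_option maxHeartbeats 1000000 in
/-- The matrix B as an element of GL₇(ℚ). -/
def BU : GL (Fin 7) ℚ :=
  ⟨Bmat, BmatInv,
    by ext i j; fin_cases i <;> fin_cases j <;>
      norm_num [Matrix.mul_apply, Fin.sum_univ_succ, Matrix.one_apply, Fin.ext_iff,
        Bmat, BmatInv],
    by ext i j; fin_cases i <;> fin_cases j <;>
      norm_num [Matrix.mul_apply, Fin.sum_univ_succ, Matrix.one_apply, Fin.ext_iff,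
        Bmat, BmatInv]⟩

open Module

namespace Module.End

section Involution

variable {K V : Type*} [Field K] [AddCommGroup V] [Module K V] {f : End K V}

theorem exists_mem_eigenspace_neg_one_ne_zero (hf : f * f = 1) (hf1 : f ≠ 1) :
    ∃ x ∈ eigenspace f (-1), x ≠ 0 := by
  obtain ⟨x, hx⟩ : ∃ x, f x ≠ x := by
    by_contra! h
    exact hf1 (LinearMap.ext h)
  refine ⟨x - f x, ?_, sub_ne_zero.mpr hx.symm⟩
  rw [mem_eigenspace_iff, map_sub, ← mul_apply, hf, one_apply, neg_one_smul, neg_sub]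

variable [NeZero (2 : K)]

theorem isProj_eigenspace_one (hf : f * f = 1) :
    LinearMap.IsProj (eigenspace f 1) ((2⁻¹ : K) • (1 + f)) where
  map_mem x := by
    rw [mem_eigenspace_iff, one_smul, ← Module.End.mul_apply, mul_smul_comm, mul_add, hf,
      mul_one, add_comm]
  map_id x hx := by
    rw [mem_eigenspace_iff, one_smul] at hx
    rw [LinearMap.smul_apply, LinearMap.add_apply, one_apply, hx, ← two_smul K, smul_smul,
      inv_mul_cancel₀ two_ne_zero, one_smul]

theorem ker_inv_two_smul_one_add :
    LinearMap.ker ((2⁻¹ : K) • (1 + f)) = eigenspace f (-1) := by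
  ext x
  rw [LinearMap.mem_ker, mem_eigenspace_iff, LinearMap.smul_apply, smul_eq_zero,
    LinearMap.add_apply, one_apply, neg_one_smul, or_iff_right (inv_ne_zero two_ne_zero),
    add_eq_zero_iff_eq_neg']

theorem isCompl_eigenspace_one_eigenspace_neg_one (hf : f * f = 1) :
    IsCompl (eigenspace f 1) (eigenspace f (-1)) :=
  ker_inv_two_smul_one_add (f := f) ▸ (isProj_eigenspace_one hf).isCompl

variable [FiniteDimensional K V]

theorem trace_eq_finrank_eigenspace_one_sub (hf : f * f = 1) :
    LinearMap.trace K V f = finrank K (eigenspace f 1) - finrank K (eigenspace f (-1)) := by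
  have hP := (isProj_eigenspace_one hf).trace
  have hdim := Submodule.finrank_add_eq_of_isCompl (isCompl_eigenspace_one_eigenspace_neg_one hf)
  rw [map_smul, map_add, LinearMap.trace_one, ← hdim, smul_eq_mul] at hP
  push_cast at hP
  field_simp at hP
  linear_combination hP

end Involution

section CrossProduct

variable {K V : Type*} [Field K] [AddCommGroup V] [Module K V] {f : End K V}
  (C : V →ₗ[K] V →ₗ[K] V)

theorem apply_mem_eigenspace_mul (hfC : ∀ x y, C (f x) (f y) = f (C x y)) {a b : K} {x y : V}
    (hx : x ∈ eigenspace f a) (hy : y ∈ eigenspace f b) : C x y ∈ eigenspace f (a * b) := by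
  rw [mem_eigenspace_iff] at hx hy ⊢
  rw [← hfC, hx, hy, map_smul, map_smul, LinearMap.smul_apply, smul_smul, mul_comm]

variable {x : V}

theorem finrank_eigenspace_neg_one_le [FiniteDimensional K V]
    (hfC : ∀ x y, C (f x) (f y) = f (C x y))
    (hx : x ∈ eigenspace f (-1)) (hker : LinearMap.ker (C x) ≤ K ∙ x) :
    finrank K (eigenspace f (-1)) ≤ finrank K (eigenspace f 1) + 1 := by
  have hmaps : Set.MapsTo (C x) (eigenspace f (-1)) (eigenspace f 1) := fun y hy => by
    simpa using apply_mem_eigenspace_mul C hfC hx hy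
  have hkerL : LinearMap.ker ((C x).restrict hmaps) ≤ K ∙ (⟨x, hx⟩ : eigenspace f (-1)) := by
    rintro ⟨y, hy⟩ hLy
    obtain ⟨c, rfl⟩ := Submodule.mem_span_singleton.mp (hker (congrArg Subtype.val hLy))
    exact Submodule.mem_span_singleton.mpr ⟨c, rfl⟩
  have hrange := (LinearMap.range ((C x).restrict hmaps)).finrank_le
  have hkerdim : finrank K (LinearMap.ker ((C x).restrict hmaps)) ≤ 1 := by
    refine (Submodule.finrank_mono hkerL).trans ?_
    simpa using finrank_span_le_card ({⟨x, hx⟩} : Set (eigenspace f (-1)))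
  have := ((C x).restrict hmaps).finrank_range_add_finrank_ker
  omega

variable [NeZero (2 : K)] [FiniteDimensional K V]

theorem finrank_eigenspace_one_le (hf : f * f = 1) (hfC : ∀ x y, C (f x) (f y) = f (C x y))
    (hx : x ∈ eigenspace f (-1)) (hker : LinearMap.ker (C x) ≤ K ∙ x) :
    finrank K (eigenspace f 1) ≤ finrank K (eigenspace f (-1)) := by
  have hmaps : Set.MapsTo (C x) (eigenspace f 1) (eigenspace f (-1)) := fun y hy => by
    simpa using apply_mem_eigenspace_mul C hfC hx hy
  refine LinearMap.finrank_le_finrank_of_injective (f := (C x).restrict hmaps) ?_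
  rw [← LinearMap.ker_eq_bot, Submodule.eq_bot_iff]
  rintro ⟨y, hy⟩ hCy
  have hy0 : C x y = 0 := congrArg Subtype.val hCy
  have hy' : y ∈ eigenspace f (-1) :=
    (Submodule.span_singleton_le_iff_mem x _).mpr hx (hker hy0)
  simpa using (isCompl_eigenspace_one_eigenspace_neg_one hf).disjoint.le_bot ⟨hy, hy'⟩

theorem trace_eq_neg_one_of_orderOf_eq_two (hker : ∀ x ≠ 0, LinearMap.ker (C x) ≤ K ∙ x)
    (hodd : Odd (finrank K V)) (hf : orderOf f = 2) (hfC : ∀ x y, C (f x) (f y) = f (C x y)) :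
    LinearMap.trace K V f = -1 := by
  obtain ⟨hf2, hf1⟩ := orderOf_eq_prime_iff.mp hf
  rw [sq] at hf2
  obtain ⟨x, hx, hx0⟩ := exists_mem_eigenspace_neg_one_ne_zero hf2 hf1
  have hle := finrank_eigenspace_one_le C hf2 hfC hx (hker x hx0)
  have hge := finrank_eigenspace_neg_one_le C hfC hx (hker x hx0)
  have hdim := Submodule.finrank_add_eq_of_isCompl (isCompl_eigenspace_one_eigenspace_neg_one hf2)
  have hsucc : finrank K (eigenspace f (-1)) = finrank K (eigenspace f 1) + 1 := by
    obtain ⟨m, hm⟩ := hodd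
    omega
  rw [trace_eq_finrank_eigenspace_one_sub hf2, hsucc]
  push_cast
  ring

end CrossProduct

end Module.End

open Matrix

def cross7 : (Fin 7 → ℚ) →ₗ[ℚ] (Fin 7 → ℚ) →ₗ[ℚ] (Fin 7 → ℚ) :=
  LinearMap.mk₂ ℚ (fun x y => ![
    -x 0 * y 1 + x 0 * y 2 - x 0 * y 3 - x 0 * y 4 - x 0 * y 5 - x 0 * y 6 + x 1 * y 0
      - 2 * x 1 * y 3 - 2 * x 1 * y 4 - 2 * x 1 * y 5 - x 2 * y 0 - 2 * x 2 * y 5 + 2 * x 2 * y 6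
      + x 3 * y 0 + 2 * x 3 * y 1 + 2 * x 3 * y 4 + 2 * x 3 * y 5 + x 4 * y 0 + 2 * x 4 * y 1
      - 2 * x 4 * y 3 + 2 * x 4 * y 6 + x 5 * y 0 + 2 * x 5 * y 1 + 2 * x 5 * y 2 - 2 * x 5 * y 3
      + x 6 * y 0 - 2 * x 6 * y 2 - 2 * x 6 * y 4,
    x 0 * y 1 + 2 * x 0 * y 6 - x 1 * y 0 - x 1 * y 2 + x 1 * y 3 + x 1 * y 4 + x 1 * y 5
      + x 1 * y 6 + x 2 * y 1 + 2 * x 2 * y 4 + 2 * x 2 * y 5 - x 3 * y 1 - 2 * x 3 * y 4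
      - 2 * x 3 * y 6 - x 4 * y 1 - 2 * x 4 * y 2 + 2 * x 4 * y 3 + 2 * x 4 * y 5 - 2 * x 4 * y 6
      - x 5 * y 1 - 2 * x 5 * y 2 - 2 * x 5 * y 4 - 2 * x 6 * y 0 - x 6 * y 1 + 2 * x 6 * y 3
      + 2 * x 6 * y 4,
    -2 * x 0 * y 1 - x 0 * y 2 - 2 * x 0 * y 4 - 2 * x 0 * y 6 + 2 * x 1 * y 0 - x 1 * y 2
      - 2 * x 1 * y 4 - 2 * x 1 * y 6 + x 2 * y 0 + x 2 * y 1 - x 2 * y 3 - x 2 * y 4 - x 2 * y 5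
      + x 2 * y 6 + x 3 * y 2 + 2 * x 3 * y 4 + 2 * x 4 * y 0 + 2 * x 4 * y 1 + x 4 * y 2
      - 2 * x 4 * y 3 + x 5 * y 2 - 2 * x 5 * y 6 + 2 * x 6 * y 0 + 2 * x 6 * y 1 - x 6 * y 2
      + 2 * x 6 * y 5,
    -2 * x 0 * y 1 - x 0 * y 3 - 2 * x 0 * y 4 - 2 * x 0 * y 5 + 2 * x 1 * y 0 - 2 * x 1 * y 2
      - x 1 * y 3 - 2 * x 1 * y 4 + 2 * x 2 * y 1 - x 2 * y 3 + 2 * x 2 * y 6 + x 3 * y 0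
      + x 3 * y 1 + x 3 * y 2 + x 3 * y 4 + x 3 * y 5 - x 3 * y 6 + 2 * x 4 * y 0 + 2 * x 4 * y 1
      - x 4 * y 3 + 2 * x 4 * y 5 + 2 * x 5 * y 0 - x 5 * y 3 - 2 * x 5 * y 4 - 2 * x 5 * y 6
      - 2 * x 6 * y 2 + x 6 * y 3 + 2 * x 6 * y 5,
    2 * x 0 * y 1 + 2 * x 0 * y 2 + x 0 * y 4 - 2 * x 1 * y 0 + 2 * x 1 * y 2 + x 1 * y 4
      - 2 * x 1 * y 5 + 2 * x 1 * y 6 - 2 * x 2 * y 0 - 2 * x 2 * y 1 + 2 * x 2 * y 3 + x 2 * y 4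
      - 2 * x 3 * y 2 - x 3 * y 4 - x 4 * y 0 - x 4 * y 1 - x 4 * y 2 + x 4 * y 3 - x 4 * y 5
      + x 4 * y 6 + 2 * x 5 * y 1 + x 5 * y 4 + 2 * x 5 * y 6 - 2 * x 6 * y 1 - x 6 * y 4
      - 2 * x 6 * y 5,
    -2 * x 0 * y 1 - 2 * x 0 * y 2 + 2 * x 0 * y 3 + x 0 * y 5 - 2 * x 0 * y 6 + 2 * x 1 * y 0
      + x 1 * y 5 - 2 * x 1 * y 6 + 2 * x 2 * y 0 - 2 * x 2 * y 3 - 2 * x 2 * y 4 - x 2 * y 5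
      - 2 * x 3 * y 0 + 2 * x 3 * y 2 + 2 * x 3 * y 4 - x 3 * y 5 + 2 * x 3 * y 6 + 2 * x 4 * y 2
      - 2 * x 4 * y 3 - x 4 * y 5 - x 5 * y 0 - x 5 * y 1 + x 5 * y 2 + x 5 * y 3 + x 5 * y 4
      - x 5 * y 6 + 2 * x 6 * y 0 + 2 * x 6 * y 1 - 2 * x 6 * y 3 + x 6 * y 5,
    -2 * x 0 * y 1 - x 0 * y 6 + 2 * x 1 * y 0 - 2 * x 1 * y 3 - 2 * x 1 * y 4 - x 1 * y 6
      - 2 * x 2 * y 3 - 2 * x 2 * y 4 - 2 * x 2 * y 5 + x 2 * y 6 + 2 * x 3 * y 1 + 2 * x 3 * y 2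
      + 2 * x 3 * y 4 + x 3 * y 6 + 2 * x 4 * y 1 + 2 * x 4 * y 2 - 2 * x 4 * y 3 + x 4 * y 6
      + 2 * x 5 * y 2 - x 5 * y 6 + x 6 * y 0 + x 6 * y 1 - x 6 * y 2 - x 6 * y 3 - x 6 * y 4
      + x 6 * y 5])
    (fun _ _ _ => by
      ext i
      fin_cases i <;>
        simp only [Pi.add_apply, Fin.isValue, Fin.zero_eta, Fin.mk_one, Fin.reduceFinMk,
          cons_val_zero, cons_val_one, cons_val] <;>
        ring)
    (fun _ _ _ => by
      ext i
      fin_cases i <;>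
        simp only [Pi.smul_apply, smul_eq_mul, Fin.isValue, Fin.zero_eta, Fin.mk_one,
          Fin.reduceFinMk, cons_val_zero, cons_val_one, cons_val] <;>
        ring)
    (fun _ _ _ => by
      ext i
      fin_cases i <;>
        simp only [Pi.add_apply, Fin.isValue, Fin.zero_eta, Fin.mk_one, Fin.reduceFinMk,
          cons_val_zero, cons_val_one, cons_val] <;>
        ring)
    (fun _ _ _ => by
      ext i
      fin_cases i <;>
        simp only [Pi.smul_apply, smul_eq_mul, Fin.isValue, Fin.zero_eta, Fin.mk_one,
          Fin.reduceFinMk, cons_val_zero, cons_val_one, cons_val] <;>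
        ring)

def cross7Form (x y : Fin 7 → ℚ) : ℚ :=
  3 * x 0 * y 0 + x 0 * y 1 - x 0 * y 2 - x 0 * y 3 - x 0 * y 4 + x 0 * y 5 - x 0 * y 6 + x 1 * y 0
  + 3 * x 1 * y 1 + x 1 * y 2 - x 1 * y 3 + x 1 * y 4 + x 1 * y 5 + x 1 * y 6 - x 2 * y 0
  + x 2 * y 1 + 3 * x 2 * y 2 - x 2 * y 3 + x 2 * y 4 - x 2 * y 5 + x 2 * y 6 - x 3 * y 0
  - x 3 * y 1 - x 3 * y 2 + 3 * x 3 * y 3 + x 3 * y 4 + x 3 * y 5 - x 3 * y 6 - x 4 * y 0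
  + x 4 * y 1 + x 4 * y 2 + x 4 * y 3 + 3 * x 4 * y 4 + x 4 * y 5 + x 4 * y 6 + x 5 * y 0
  + x 5 * y 1 - x 5 * y 2 + x 5 * y 3 + x 5 * y 4 + 3 * x 5 * y 5 - x 5 * y 6 - x 6 * y 0
  + x 6 * y 1 + x 6 * y 2 - x 6 * y 3 + x 6 * y 4 - x 6 * y 5 + 3 * x 6 * y 6

theorem cross7_cross7 (x y : Fin 7 → ℚ) :
    cross7 x (cross7 x y) = cross7Form x y • x - cross7Form x x • y := by
  ext i
  fin_cases i <;>
    simp only [cross7, LinearMap.mk₂_apply, cross7Form, Pi.sub_apply, Pi.smul_apply, smul_eq_mul,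
      Fin.isValue, Fin.zero_eta, Fin.mk_one, Fin.reduceFinMk, cons_val_zero, cons_val_one,
      cons_val] <;>
    ring

theorem cross7Form_self (x : Fin 7 → ℚ) :
    cross7Form x x =
      3 * (x 0 + (x 1 - x 2 - x 3 - x 4 + x 5 - x 6) / 3) ^ 2
      + 8 / 3 * (x 1 + x 2 / 2 - x 3 / 4 + x 4 / 2 + x 5 / 4 + x 6 / 2) ^ 2
      + 2 * (x 2 - x 3 / 2 - x 5 / 2) ^ 2 + 2 * (x 3 + x 4 / 2 + x 5 / 2 - x 6 / 2) ^ 2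
      + 3 / 2 * (x 4 + x 5 / 3 + x 6 / 3) ^ 2 + 4 / 3 * (x 5 - x 6 / 2) ^ 2 + x 6 ^ 2 := by
  unfold cross7Form
  ring

theorem eq_zero_of_cross7Form_self_eq_zero {x : Fin 7 → ℚ} (h : cross7Form x x = 0) : x = 0 := by
  rw [cross7Form_self] at h
  simp (disch := positivity) only [add_eq_zero_iff_of_nonneg, mul_eq_zero, OfNat.ofNat_ne_zero,
    div_eq_zero_iff, false_or, or_false, pow_eq_zero_iff] at h
  obtain ⟨⟨⟨⟨⟨⟨h0, h1⟩, h2⟩, h3⟩, h4⟩, h5⟩, h6⟩ := h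
  ext i
  fin_cases i <;>
    simp only [Fin.zero_eta, Fin.mk_one, Fin.reduceFinMk, Fin.isValue, Pi.zero_apply] <;>
    linarith

theorem ker_cross7_le_span {x : Fin 7 → ℚ} (hx : x ≠ 0) : LinearMap.ker (cross7 x) ≤ ℚ ∙ x := by
  intro y hy
  have hxx : cross7Form x x ≠ 0 := fun h => hx (eq_zero_of_cross7Form_self_eq_zero h)
  have h := cross7_cross7 x y
  rw [LinearMap.mem_ker.mp hy, map_zero, eq_comm, sub_eq_zero] at h
  refine Submodule.mem_span_singleton.mpr ⟨cross7Form x y / cross7Form x x, ?_⟩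
  rw [div_eq_inv_mul, mul_smul, h, inv_smul_smul₀ hxx]

theorem Amat_mulVec (v : Fin 7 → ℚ) :
    Amat *ᵥ v = ![-v 0, -v 1, v 1 + v 5, -v 0 + v 6, v 4, v 1 + v 2, -v 0 + v 3] := by
  ext i; fin_cases i <;> simp [Amat, mulVec, dotProduct, Fin.sum_univ_seven]

theorem Bmat_mulVec (v : Fin 7 → ℚ) :
    Bmat *ᵥ v = ![-v 1 - v 5, v 1 + v 2, -v 1, v 0, -v 6, -v 3 + v 6, v 4 + v 6] := by
  ext i; fin_cases i <;> simp [Bmat, mulVec, dotProduct, Fin.sum_univ_seven, sub_eq_add_neg]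

theorem cross7_Amat_mulVec (x y : Fin 7 → ℚ) :
    cross7 (Amat *ᵥ x) (Amat *ᵥ y) = Amat *ᵥ cross7 x y := by
  rw [Amat_mulVec, Amat_mulVec, Amat_mulVec]
  ext i
  fin_cases i <;>
    simp only [cross7, LinearMap.mk₂_apply, Fin.isValue, Fin.zero_eta, Fin.mk_one,
      Fin.reduceFinMk, cons_val_zero, cons_val_one, cons_val] <;>
    ring

theorem cross7_Bmat_mulVec (x y : Fin 7 → ℚ) :
    cross7 (Bmat *ᵥ x) (Bmat *ᵥ y) = Bmat *ᵥ cross7 x y := by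
  rw [Bmat_mulVec, Bmat_mulVec, Bmat_mulVec]
  ext i
  fin_cases i <;>
    simp only [cross7, LinearMap.mk₂_apply, Fin.isValue, Fin.zero_eta, Fin.mk_one,
      Fin.reduceFinMk, cons_val_zero, cons_val_one, cons_val] <;>
    ring

section GeneralLinearGroup

variable {n K : Type*} [Fintype n] [DecidableEq n] [CommRing K]

def productAutSubgroup (C : (n → K) → (n → K) → (n → K)) : Subgroup (GL n K) where
  carrier := {g | ∀ x y, C (g *ᵥ x) (g *ᵥ y) = g *ᵥ C x y}
  one_mem' := by simp
  mul_mem' {a b} ha hb x y := by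
    simp only [Units.val_mul, ← mulVec_mulVec]
    rw [ha, hb]
  inv_mem' {g} hg x y := by
    have h := hg ((g⁻¹ : GL n K) *ᵥ x) ((g⁻¹ : GL n K) *ᵥ y)
    simp only [mulVec_mulVec, Units.mul_inv, one_mulVec] at h
    rw [h, mulVec_mulVec, Units.inv_mul, one_mulVec]

theorem orderOf_toLinAlgEquiv' (g : GL n K) :
    orderOf (toLinAlgEquiv' (g : Matrix n n K)) = orderOf g :=
  orderOf_injective ((toLinAlgEquiv' : Matrix n n K ≃ₐ[K] _).toMonoidHom.comp (Units.coeHom _))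
    (toLinAlgEquiv'.injective.comp Units.val_injective) g

end GeneralLinearGroup

theorem closure_le_productAutSubgroup_cross7 :
    Subgroup.closure {AU, BU} ≤ productAutSubgroup (fun x y => cross7 x y) := by
  rw [Subgroup.closure_le]
  rintro g (rfl | rfl)
  · exact cross7_Amat_mulVec
  · exact cross7_Bmat_mulVec

/-- Every element of order 2 in the subgroup of GL₇(ℚ) generated by A and B has
trace −1. -/
theorem trace_of_involution_eq_neg_one :
    ∀ g ∈ (Subgroup.closure {AU, BU} : Subgroup (GL (Fin 7) ℚ)),
      orderOf g = 2 → Matrix.trace (g : Matrix (Fin 7) (Fin 7) ℚ) = -1 := by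
  intro g hg hord
  rw [← trace_toLin'_eq]
  exact Module.End.trace_eq_neg_one_of_orderOf_eq_two cross7 (fun _ => ker_cross7_le_span)
    (by simp [Nat.odd_iff]) ((orderOf_toLinAlgEquiv' g).trans hord)
    (closure_le_productAutSubgroup_cross7 hg)

end
end
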